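/- For all natural numbers n and m, the map from Mon([n],[m]) × ZMod (n+1) to ZM(n,m)/≈, sending a pair (ψ, a) to the ≈-class of the function k ↦ ψ̂(k + ã), where ã ∈ ℤ is any representative of a ∈ ZMod (n+1), is well defined (independent of the choice of representative ã) and is a bijection. That is, every morphism in the cyclic category Λ factors uniquely as a morphism in Δ precomposed with an automorphism of its source. -/

import Mathlib

/-!
Every `f ∈ ZM n m` has a unique window: an `s ∈ ℤ` with `0 ≤ f s` and `f (s + n) ≤ m`.
It exists (take the least `s` with `0 ≤ f s`) and is unique because `f (s + n + 1) = f s + m + 1`.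
Restricting `f` to `[s, s + n]` gives `ψ ∈ Mon([n],[m])` with `f = ψ̂ (· - s)`, so `(ψ, -s)` is a
preimage of the class of `f`. Conversely the window of `ψ̂ (· + a)` is `-a`, and replacing `f` by an
`≈`-equivalent function moves its window by a multiple of `n + 1`; hence the class determines `a`
in `ZMod (n + 1)`, and then `ψ`.
-/

def InZM (n m : ℕ) (f : ℤ → ℤ) : Prop :=
  Monotone f ∧ ∀ k : ℤ, f (k + (n + 1)) = f k + (m + 1)

abbrev ZM (n m : ℕ) : Type := {f : ℤ → ℤ // InZM n m f}

def ZMrel (n m : ℕ) (f g : ZM n m) : Prop :=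
  ∃ c : ℤ, ∀ k : ℤ, g.1 k = f.1 (k + c * ((n : ℤ) + 1))

def IsExtension (n m : ℕ) (ψ : Fin (n + 1) → Fin (m + 1)) (h : ZM n m) : Prop :=
  ∀ (c : ℤ) (k : Fin (n + 1)),
    h.1 (((k : ℕ) : ℤ) + c * ((n : ℤ) + 1)) = (((ψ k : ℕ) : ℤ)) + c * ((m : ℤ) + 1)

theorem map_add_mul_of_map_add {f : ℤ → ℤ} {N M : ℤ} (hf : ∀ k, f (k + N) = f k + M)
    (k c : ℤ) : f (k + c * N) = f k + c * M := by
  induction c using Int.induction_on with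
  | zero => simp
  | succ i ih => rw [add_one_mul, ← add_assoc, hf, ih]; ring
  | pred i ih =>
    have := hf (k + (-(i : ℤ) - 1) * N)
    rw [add_assoc, show (-(i : ℤ) - 1) * N + N = -i * N by ring, ih] at this
    linarith

theorem exists_fin_add_mul (n : ℕ) (k : ℤ) :
    ∃ (j : Fin (n + 1)) (c : ℤ), k = ((j : ℕ) : ℤ) + c * ((n : ℤ) + 1) := by
  have hN : (0 : ℤ) < (n : ℤ) + 1 := by positivity
  have hr := Int.emod_nonneg k hN.ne'
  have hrN := Int.emod_lt_of_pos k hN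
  refine ⟨⟨(k % ((n : ℤ) + 1)).toNat, by omega⟩, k / ((n : ℤ) + 1), ?_⟩
  have := Int.emod_add_mul_ediv k ((n : ℤ) + 1)
  simp only [Int.toNat_of_nonneg hr]
  linarith

theorem monotone_of_map_add {n : ℕ} {M : ℤ} {f : ℤ → ℤ}
    (hf : ∀ k, f (k + ((n : ℤ) + 1)) = f k + M) (hstep : ∀ j : Fin (n + 1), f j ≤ f (j + 1)) :
    Monotone f := by
  refine monotone_int_of_le_succ fun k => ?_
  obtain ⟨j, c, rfl⟩ := exists_fin_add_mul n k
  rw [add_right_comm, map_add_mul_of_map_add hf, map_add_mul_of_map_add hf]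
  linarith [hstep j]

theorem ZMrel.equivalence (n m : ℕ) : Equivalence (ZMrel n m) where
  refl _ := ⟨0, fun k => by simp⟩
  symm := fun ⟨c, hc⟩ => ⟨-c, fun k => by rw [hc]; ring_nf⟩
  trans := fun ⟨c, hc⟩ ⟨d, hd⟩ => ⟨d + c, fun k => by rw [hd, hc]; ring_nf⟩

namespace ZM

variable {n m : ℕ}

theorem map_add_mul (f : ZM n m) (k c : ℤ) :
    f.1 (k + c * ((n : ℤ) + 1)) = f.1 k + c * ((m : ℤ) + 1) :=
  map_add_mul_of_map_add f.2.2 k c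

theorem ext_fin {f g : ZM n m} (h : ∀ j : Fin (n + 1), f.1 j = g.1 j) : f = g := by
  refine Subtype.ext (funext fun k => ?_)
  obtain ⟨j, c, rfl⟩ := exists_fin_add_mul n k
  rw [map_add_mul, map_add_mul, h]

def shift (f : ZM n m) (t : ℤ) : ZM n m :=
  ⟨fun k => f.1 (k + t), f.2.1.comp fun _ _ h => add_le_add_left h t, fun k => by
    simp only [add_right_comm k, f.2.2]⟩

@[simp]
theorem shift_apply (f : ZM n m) (t k : ℤ) : (f.shift t).1 k = f.1 (k + t) := rfl

@[simp]
theorem shift_zero (f : ZM n m) : f.shift 0 = f := by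
  ext k
  simp

theorem shift_left_injective (t : ℤ) : Function.Injective fun f : ZM n m => f.shift t := by
  intro f g h
  ext k
  simpa using congrArg (fun f : ZM n m => f.1 (k - t)) h

theorem eq_shift_of_rel {f g : ZM n m} (h : ZMrel n m f g) :
    ∃ c : ℤ, g = f.shift (c * ((n : ℤ) + 1)) :=
  let ⟨c, hc⟩ := h
  ⟨c, Subtype.ext (funext hc)⟩

end ZM

section Extension

variable {n m : ℕ}

theorem isExtension_iff {ψ : Fin (n + 1) → Fin (m + 1)} {h : ZM n m} :
    IsExtension n m ψ h ↔ ∀ j : Fin (n + 1), h.1 j = ψ j :=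
  ⟨fun H j => by simpa using H 0 j, fun H c j => by rw [ZM.map_add_mul, H]⟩

theorem IsExtension.eq {ψ : Fin (n + 1) → Fin (m + 1)} {h h' : ZM n m}
    (H : IsExtension n m ψ h) (H' : IsExtension n m ψ h') : h = h' :=
  ZM.ext_fin fun j => by rw [isExtension_iff.1 H, isExtension_iff.1 H']

def extendFun (ψ : Fin (n + 1) → Fin (m + 1)) (k : ℤ) : ℤ :=
  ((ψ ⟨(k : ZMod (n + 1)).val, ZMod.val_lt _⟩ : ℕ) : ℤ) + k / ((n : ℤ) + 1) * ((m : ℤ) + 1)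

theorem extendFun_fin (ψ : Fin (n + 1) → Fin (m + 1)) (j : Fin (n + 1)) :
    extendFun ψ j = ψ j := by
  have hj : ((j : ℕ) : ℤ) < (n : ℤ) + 1 := by exact_mod_cast j.2
  simp [extendFun, ZMod.val_natCast_of_lt j.2, Int.ediv_eq_zero_of_lt (by positivity) hj]

theorem extendFun_add (ψ : Fin (n + 1) → Fin (m + 1)) (k : ℤ) :
    extendFun ψ (k + ((n : ℤ) + 1)) = extendFun ψ k + ((m : ℤ) + 1) := by
  have hcast : ((k + ((n : ℤ) + 1) : ℤ) : ZMod (n + 1)) = k := by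
    push_cast
    rw [← Nat.cast_succ, ZMod.natCast_self, add_zero]
  have hdiv : (k + ((n : ℤ) + 1)) / ((n : ℤ) + 1) = k / ((n : ℤ) + 1) + 1 := by
    simpa using Int.add_mul_ediv_right k 1 (by positivity : (n : ℤ) + 1 ≠ 0)
  simp only [extendFun, hcast, hdiv]
  ring

theorem monotone_extendFun {ψ : Fin (n + 1) → Fin (m + 1)} (hψ : Monotone ψ) :
    Monotone (extendFun ψ) := by
  refine monotone_of_map_add (extendFun_add ψ) fun j => ?_
  rcases (Fin.le_last j).lt_or_eq with hj | rfl
  · have hj' : (j : ℕ) + 1 < n + 1 := by simpa [Fin.lt_def] using hj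
    have hsucc := extendFun_fin ψ ⟨j + 1, hj'⟩
    push_cast at hsucc
    rw [hsucc, extendFun_fin]
    exact_mod_cast hψ (Fin.le_def.2 (Nat.le_succ _))
  · have h0 := extendFun_fin ψ 0
    rw [Fin.val_zero, Nat.cast_zero] at h0
    rw [extendFun_fin, Fin.val_last, ← zero_add ((n : ℤ) + 1), extendFun_add, h0]
    have := (ψ (Fin.last n)).2
    omega

def extend (ψ : {ψ : Fin (n + 1) → Fin (m + 1) // Monotone ψ}) : ZM n m :=
  ⟨extendFun ψ.1, monotone_extendFun ψ.2, extendFun_add ψ.1⟩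

theorem isExtension_extend (ψ : {ψ : Fin (n + 1) → Fin (m + 1) // Monotone ψ}) :
    IsExtension n m ψ.1 (extend ψ) :=
  isExtension_iff.2 (extendFun_fin ψ.1)

theorem extend_injective : Function.Injective (extend : _ → ZM n m) := by
  intro ψ ψ' h
  refine Subtype.ext (funext fun j => Fin.ext ?_)
  have := congrArg (fun f : ZM n m => f.1 j) h
  simp only [extend, extendFun_fin] at this
  exact_mod_cast this

end Extension

namespace ZM

variable {n m : ℕ}

def IsWindow (f : ZM n m) (s : ℤ) : Prop :=
  0 ≤ f.1 s ∧ f.1 (s + n) ≤ m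

theorem IsWindow.eq {f : ZM n m} {s t : ℤ} (hs : f.IsWindow s) (ht : f.IsWindow t) : s = t := by
  by_contra hne
  wlog hlt : s < t generalizing s t
  · exact this ht hs (Ne.symm hne) (by omega)
  have := f.2.1 (show s + ((n : ℤ) + 1) ≤ t + n by omega)
  rw [f.2.2] at this
  linarith [hs.1, ht.2]

@[simp]
theorem isWindow_shift {f : ZM n m} {s t : ℤ} : (f.shift t).IsWindow s ↔ f.IsWindow (s + t) := by
  simp [IsWindow, add_right_comm s]

theorem exists_isWindow (f : ZM n m) : ∃ s, f.IsWindow s := by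
  have hmul (c : ℤ) : f.1 (c * ((n : ℤ) + 1)) = f.1 0 + c * ((m : ℤ) + 1) := by
    simpa using f.map_add_mul 0 c
  have hne : ∃ z, 0 ≤ f.1 z :=
    ⟨|f.1 0| * ((n : ℤ) + 1), by rw [hmul]; nlinarith [neg_abs_le (f.1 0), abs_nonneg (f.1 0)]⟩
  have hbdd : ∃ b, ∀ z, 0 ≤ f.1 z → b ≤ z := by
    refine ⟨-(|f.1 0| + 1) * ((n : ℤ) + 1), fun z hz => le_of_not_gt fun hlt => ?_⟩
    have := f.2.1 hlt.le
    rw [hmul] at this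
    nlinarith [le_abs_self (f.1 0), abs_nonneg (f.1 0)]
  obtain ⟨s, hs, hmin⟩ := Int.exists_least_of_bdd hbdd hne
  have hprev : f.1 (s - 1) < 0 := lt_of_not_ge fun h => by linarith [hmin _ h]
  have := f.2.2 (s - 1)
  rw [sub_add_add_cancel] at this
  exact ⟨s, hs, by omega⟩

theorem IsWindow.mem_Icc {f : ZM n m} {s : ℤ} (hs : f.IsWindow s) (j : Fin (n + 1)) :
    f.1 (s + j) ∈ Set.Icc 0 (m : ℤ) := by
  have hj : ((j : ℕ) : ℤ) ≤ n := by exact_mod_cast Nat.lt_succ_iff.1 j.2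
  exact ⟨hs.1.trans (f.2.1 (by omega)), (f.2.1 (by omega)).trans hs.2⟩

def windowMap {f : ZM n m} {s : ℤ} (hs : f.IsWindow s) :
    {ψ : Fin (n + 1) → Fin (m + 1) // Monotone ψ} :=
  ⟨fun j => ⟨(f.1 (s + j)).toNat, by have := (hs.mem_Icc j).2; omega⟩,
    fun _ _ hij => Fin.le_def.2 <| Int.toNat_le_toNat <| f.2.1 <| by
      have : (_ : ℕ) ≤ _ := Fin.le_def.1 hij
      omega⟩

theorem windowMap_apply {f : ZM n m} {s : ℤ} (hs : f.IsWindow s) (j : Fin (n + 1)) :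
    (((windowMap hs).1 j : ℕ) : ℤ) = f.1 (s + j) :=
  Int.toNat_of_nonneg (hs.mem_Icc j).1

theorem isExtension_windowMap {f : ZM n m} {s : ℤ} (hs : f.IsWindow s) :
    IsExtension n m (windowMap hs).1 (f.shift s) :=
  isExtension_iff.2 fun j => by rw [shift_apply, windowMap_apply, add_comm]

end ZM

theorem IsExtension.isWindow_zero {n m : ℕ} {ψ : Fin (n + 1) → Fin (m + 1)} {h : ZM n m}
    (H : IsExtension n m ψ h) : h.IsWindow 0 := by
  have h0 := isExtension_iff.1 H 0
  have hn := isExtension_iff.1 H (Fin.last n)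
  rw [Fin.val_zero, Nat.cast_zero] at h0
  rw [Fin.val_last] at hn
  have := (ψ (Fin.last n)).2
  exact ⟨h0 ▸ Int.natCast_nonneg _, by rw [zero_add, hn]; omega⟩

def cyclicHom (n m : ℕ) (p : {ψ : Fin (n + 1) → Fin (m + 1) // Monotone ψ} × ZMod (n + 1)) :
    Quot (ZMrel n m) :=
  Quot.mk _ ((extend p.1).shift p.2.val)

section Factorization

variable {n m : ℕ}

theorem cyclicHom_eq_mk {ψ : {ψ : Fin (n + 1) → Fin (m + 1) // Monotone ψ}} {a : ℤ}
    {h g : ZM n m} (hh : IsExtension n m ψ.1 h) (hg : ∀ x : ℤ, g.1 x = h.1 (x + a)) :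
    cyclicHom n m (ψ, (a : ZMod (n + 1))) = Quot.mk _ g := by
  obtain rfl := (isExtension_extend ψ).eq hh
  refine Quot.sound ⟨a / ((n : ℤ) + 1), fun k => ?_⟩
  have hval : (((a : ZMod (n + 1)).val : ℕ) : ℤ) = a % ((n : ℤ) + 1) := by
    exact_mod_cast ZMod.val_intCast (n := n + 1) a
  have := Int.emod_add_mul_ediv a ((n : ℤ) + 1)
  change g.1 k = (extend ψ).1 (k + a / ((n : ℤ) + 1) * ((n : ℤ) + 1) + (a : ZMod (n + 1)).val)
  rw [hg, hval, show k + a / ((n : ℤ) + 1) * ((n : ℤ) + 1) + a % ((n : ℤ) + 1) = k + a by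
    linarith]

theorem cyclicHom_injective : Function.Injective (cyclicHom n m) := by
  rintro ⟨ψ, a⟩ ⟨ψ', a'⟩ heq
  obtain ⟨c, hc⟩ :=
    ZM.eq_shift_of_rel ((ZMrel.equivalence n m).eqvGen_iff.1 (Quot.eqvGen_exact heq))
  change (extend ψ').shift a'.val = ((extend ψ).shift a.val).shift _ at hc
  set F := (extend ψ).shift a.val
  have hwin : F.IsWindow (-a.val) := by
    rw [ZM.isWindow_shift, neg_add_cancel]
    exact (isExtension_extend ψ).isWindow_zero
  have hwin' : F.IsWindow (-a'.val + c * ((n : ℤ) + 1)) := by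
    rw [← ZM.isWindow_shift, ← hc, ZM.isWindow_shift, neg_add_cancel]
    exact (isExtension_extend ψ').isWindow_zero
  have hst := hwin.eq hwin'
  obtain rfl : a = a' := by
    simpa using congrArg (Int.cast : ℤ → ZMod (n + 1)) hst
  rw [show c * ((n : ℤ) + 1) = 0 by linarith, ZM.shift_zero] at hc
  rw [extend_injective (ZM.shift_left_injective _ hc.symm)]

theorem cyclicHom_surjective : Function.Surjective (cyclicHom n m) := by
  rintro ⟨f⟩
  obtain ⟨s, hs⟩ := f.exists_isWindow
  exact ⟨(ZM.windowMap hs, ((-s : ℤ) : ZMod (n + 1))),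
    cyclicHom_eq_mk (ZM.isExtension_windowMap hs) fun x => by simp⟩

end Factorization

/-- Canonical factorization in the cyclic category `Λ`: the map
`Mon([n],[m]) × ℤ/(n+1) → Hom_Λ(⟨n⟩,⟨m⟩) = ZM(n,m)/≈`, `(ψ, a) ↦ [ψ̂(· + ã)]`,
is well defined and a bijection. -/
theorem stmt_8 (n m : ℕ) :
    ∃ Φ : ({ψ : Fin (n + 1) → Fin (m + 1) // Monotone ψ} × ZMod (n + 1)) →
        Quot (ZMrel n m),
      Function.Bijective Φ ∧
      ∀ (ψ : {ψ : Fin (n + 1) → Fin (m + 1) // Monotone ψ}) (a : ℤ) (h g : ZM n m),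
        IsExtension n m ψ.1 h → (∀ x : ℤ, g.1 x = h.1 (x + a)) →
        Φ (ψ, ((a : ℤ) : ZMod (n + 1))) = Quot.mk (ZMrel n m) g :=
  ⟨cyclicHom n m, ⟨cyclicHom_injective, cyclicHom_surjective⟩,
    fun _ _ _ _ hh hg => cyclicHom_eq_mk hh hg⟩
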